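/- Let Y be a real symmetric positive semi-definite n×n matrix with eigendecomposition Y = Φ Σ_Y Φᵀ, where Φ is orthogonal and Σ_Y = diag(σ_{1,Y}, …, σ_{n,Y}) with σ_{i,Y} ≥ 0. Let α > 0 and Σ_{U₀}² = diag(σ_{1,0}, …, σ_{n,0}) with σ_{i,0} ≥ 0, and let W(t) be the unique solution of Ẇ = WY + YW − 2W² with W(0) = α Φ Σ_{U₀}² Φᵀ. If σ_{i,0} > 0 for every index i with σ_{i,Y} > 0, then W(t) → Y entrywise as t → ∞. -/

import Mathlib

/-!
In the eigenbasis of `Y` the spectral initialization is diagonal, and the equation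
`Ẇ = WY + YW - 2W²` preserves diagonality: `Φ diag(w(t)) Φᵀ` is a solution as soon as each
eigenvalue `w_k` solves the logistic equation `ẇ = 2 d_k w - 2 w²`, which is solved explicitly.
Its solution tends to `d_k` when `d_k > 0` and `w_k(0) > 0`, and to `0` when `d_k = 0`.
The right-hand side is Lipschitz on bounded sets, so by Grönwall this explicit curve is the
only solution, which gives the entrywise limit `Φ diag(d) Φᵀ = Y`.
-/

open scoped Matrix.Norms.L2Operator
open scoped Matrix
open Filter Topology Metric Set

def riccatiField {R : Type*} [Ring R] (Y X : R) : R := X * Y + Y * X - 2 * (X * X)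

lemma riccatiField_conj {R : Type*} [Ring R] {u v : R} (h : v * u = 1) (Y X : R) :
    riccatiField (u * Y * v) (u * X * v) = u * riccatiField Y X * v := by
  have hmul : ∀ A B : R, u * A * v * (u * B * v) = u * (A * B) * v := fun A B => by
    rw [show u * A * v * (u * B * v) = u * A * (v * u) * B * v by simp only [mul_assoc], h,
      mul_one, mul_assoc u A B]
  simp only [riccatiField, hmul]
  noncomm_ring

lemma riccatiField_diagonal {m : Type*} [Fintype m] [DecidableEq m] (d w : m → ℝ) :
    riccatiField (Matrix.diagonal d) (Matrix.diagonal w)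
      = Matrix.diagonal (fun k => 2 * d k * w k - 2 * w k ^ 2) := by
  simp only [riccatiField, Matrix.diagonal_mul_diagonal, two_mul, Matrix.diagonal_add,
    Matrix.diagonal_sub]
  congr 1
  funext k
  ring

lemma lipschitzOnWith_riccatiField {R : Type*} [NormedRing R] (Y : R) (r : NNReal) :
    LipschitzOnWith (2 * ‖Y‖₊ + 4 * r) (riccatiField Y) (closedBall 0 r) := by
  refine LipschitzOnWith.of_dist_le_mul fun x hx y hy => ?_
  rw [mem_closedBall_zero_iff] at hx hy
  rw [dist_eq_norm, dist_eq_norm]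
  set A := x - y
  -- `2 * z` is expanded to `z + z`: in a normed ring `‖2‖ ≤ 2` may fail.
  have hdiff : riccatiField Y x - riccatiField Y y
      = A * Y + Y * A - (x * A + A * y) - (x * A + A * y) := by
    simp only [riccatiField, A]; noncomm_ring
  have hquad : ‖x * A + A * y‖ ≤ 2 * r * ‖A‖ := calc
    ‖x * A + A * y‖ ≤ ‖x‖ * ‖A‖ + ‖A‖ * ‖y‖ :=
      (norm_add_le _ _).trans (add_le_add (norm_mul_le _ _) (norm_mul_le _ _))
    _ ≤ r * ‖A‖ + ‖A‖ * r := by gcongr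
    _ = 2 * r * ‖A‖ := by ring
  push_cast
  rw [hdiff]
  have h₁ := norm_sub_le (A * Y + Y * A - (x * A + A * y)) (x * A + A * y)
  have h₂ := norm_sub_le (A * Y + Y * A) (x * A + A * y)
  have h₃ := norm_add_le (A * Y) (Y * A)
  linarith [norm_mul_le A Y, norm_mul_le Y A]

theorem ODE_solution_unique_Ici_of_lipschitzOnWith_closedBall
    {E : Type*} [NormedAddCommGroup E] [NormedSpace ℝ E] {v : E → E}
    (hv : ∀ r : NNReal, ∃ K, LipschitzOnWith K v (closedBall 0 r)) {f g : ℝ → E} {a : ℝ}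
    (hf : ∀ t ∈ Ici a, HasDerivWithinAt f (v (f t)) (Ici a) t)
    (hg : ∀ t ∈ Ici a, HasDerivWithinAt g (v (g t)) (Ici a) t)
    (ha : f a = g a) : EqOn f g (Ici a) := by
  -- On `[a, T]` both solutions stay in one closed ball, where `v` is Lipschitz.
  intro T hT
  have hcont : ∀ h : ℝ → E, (∀ t ∈ Ici a, HasDerivWithinAt h (v (h t)) (Ici a) t) →
      ContinuousOn h (Icc a T) := fun h hh t ht =>
    ((hh t ht.1).continuousWithinAt).mono Icc_subset_Ici_self
  obtain ⟨r, hr⟩ := ((isCompact_Icc.image_of_continuousOn (hcont f hf)).union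
    (isCompact_Icc.image_of_continuousOn (hcont g hg))).isBounded.subset_closedBall 0
  have hball : closedBall (0 : E) r ⊆ closedBall 0 r.toNNReal :=
    closedBall_subset_closedBall (Real.le_coe_toNNReal r)
  obtain ⟨K, hK⟩ := hv r.toNNReal
  have hderiv : ∀ h : ℝ → E, (∀ t ∈ Ici a, HasDerivWithinAt h (v (h t)) (Ici a) t) →
      ∀ t ∈ Ico a T, HasDerivWithinAt h (v (h t)) (Ici t) t := fun h hh t ht =>
    (hh t ht.1).mono (Ici_subset_Ici.mpr ht.1)
  exact ODE_solution_unique_of_mem_Icc_right (fun _ _ => hK) (hcont f hf) (hderiv f hf)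
    (fun t ht => hball (hr (Or.inl ⟨t, Ico_subset_Icc_self ht, rfl⟩))) (hcont g hg) (hderiv g hg)
    (fun t ht => hball (hr (Or.inr ⟨t, Ico_subset_Icc_self ht, rfl⟩))) ha ⟨hT, le_rfl⟩

/-- The explicit solution of `ẇ = 2 D w - 2 w²`, `w 0 = w₀` (for `D, w₀ ≥ 0`). -/
noncomputable def logisticSol (D w₀ t : ℝ) : ℝ :=
  if D = 0 then w₀ / (1 + 2 * w₀ * t)
  else D * w₀ / (w₀ + (D - w₀) * Real.exp (-(2 * D * t)))

section Logistic

variable {D w₀ t : ℝ}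

lemma logisticSol_zero_left (w₀ : ℝ) :
    logisticSol 0 w₀ = fun t => w₀ / (1 + 2 * w₀ * t) := by
  funext t
  simp [logisticSol]

lemma logisticSol_of_ne_zero (hD : D ≠ 0) (w₀ : ℝ) :
    logisticSol D w₀ = fun t => D * w₀ / (w₀ + (D - w₀) * Real.exp (-(2 * D * t))) := by
  funext t
  simp [logisticSol, hD]

lemma logisticSol_apply_zero (D w₀ : ℝ) : logisticSol D w₀ 0 = w₀ := by
  by_cases hD : D = 0
  · simp [hD, logisticSol_zero_left]
  · simp [logisticSol_of_ne_zero hD, hD]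

lemma hasDerivAt_logisticSol_zero_left (hw₀ : 0 ≤ w₀) (ht : 0 ≤ t) :
    HasDerivAt (logisticSol 0 w₀) (-2 * logisticSol 0 w₀ t ^ 2) t := by
  have hq : 1 + 2 * w₀ * t ≠ 0 := by positivity
  have hq' : HasDerivAt (fun s => 1 + 2 * w₀ * s) (2 * w₀) t := by
    simpa using ((hasDerivAt_id t).const_mul (2 * w₀)).const_add 1
  rw [logisticSol_zero_left]
  refine ((hasDerivAt_const t w₀).div hq' hq).congr_deriv ?_
  field_simp
  ring

lemma hasDerivAt_logisticSol_of_pos (hD : 0 < D) (hw₀ : 0 ≤ w₀) (ht : 0 ≤ t) :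
    HasDerivAt (logisticSol D w₀) (2 * D * logisticSol D w₀ t - 2 * logisticSol D w₀ t ^ 2) t := by
  have hu_pos : 0 < Real.exp (-(2 * D * t)) := Real.exp_pos _
  have hu_le : Real.exp (-(2 * D * t)) ≤ 1 := Real.exp_le_one_iff.mpr (by nlinarith)
  -- the denominator is `w₀ (1 - u) + D u` with `u = exp (-2Dt) ∈ (0, 1]`
  have hq : w₀ + (D - w₀) * Real.exp (-(2 * D * t)) ≠ 0 := by nlinarith
  have hexp : HasDerivAt (fun s => Real.exp (-(2 * D * s)))
      (-(2 * D) * Real.exp (-(2 * D * t))) t := by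
    simpa [mul_comm] using ((hasDerivAt_id t).const_mul (2 * D)).fun_neg.exp
  rw [logisticSol_of_ne_zero hD.ne']
  refine ((hasDerivAt_const t (D * w₀)).div
    ((hexp.const_mul (D - w₀)).const_add w₀) hq).congr_deriv ?_
  field_simp
  ring

lemma hasDerivAt_logisticSol (hD : 0 ≤ D) (hw₀ : 0 ≤ w₀) (ht : 0 ≤ t) :
    HasDerivAt (logisticSol D w₀) (2 * D * logisticSol D w₀ t - 2 * logisticSol D w₀ t ^ 2) t := by
  rcases hD.eq_or_lt with rfl | hD
  · simpa using hasDerivAt_logisticSol_zero_left hw₀ ht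
  · exact hasDerivAt_logisticSol_of_pos hD hw₀ ht

lemma tendsto_logisticSol (hD : 0 ≤ D) (hw₀ : 0 ≤ w₀) (hpos : 0 < D → 0 < w₀) :
    Tendsto (logisticSol D w₀) atTop (𝓝 D) := by
  rcases hD.eq_or_lt with rfl | hD
  · rw [logisticSol_zero_left]
    rcases hw₀.eq_or_lt with rfl | hw₀
    · simp
    · exact tendsto_const_nhds.div_atTop <|
        tendsto_atTop_add_const_left _ 1 (tendsto_id.const_mul_atTop (by positivity))
  · have hw₀ := hpos hD
    have hexp : Tendsto (fun s => Real.exp (-(2 * D * s))) atTop (𝓝 0) :=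
      Real.tendsto_exp_neg_atTop_nhds_zero.comp (tendsto_id.const_mul_atTop (by positivity))
    have hq : Tendsto (fun s => w₀ + (D - w₀) * Real.exp (-(2 * D * s))) atTop (𝓝 w₀) := by
      simpa using (hexp.const_mul (D - w₀)).const_add w₀
    have hlim := (tendsto_const_nhds (x := D * w₀)).div hq hw₀.ne'
    rw [mul_div_cancel_right₀ _ hw₀.ne'] at hlim
    rw [logisticSol_of_ne_zero hD.ne']
    exact hlim

end Logistic

section Spectral

variable {m : Type*} [Fintype m] [DecidableEq m]

lemma hasDerivAt_matrix_diagonal {f : ℝ → m → ℝ} {f' : m → ℝ} {t : ℝ}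
    (hf : ∀ k, HasDerivAt (fun s => f s k) (f' k) t) :
    HasDerivAt (fun s => Matrix.diagonal (f s)) (Matrix.diagonal f') t := by
  have hsum : ∀ g : m → ℝ, Matrix.diagonal g = ∑ k, g k • Matrix.single k k (1 : ℝ) := fun g => by
    simp only [Matrix.smul_single, smul_eq_mul, mul_one, Matrix.sum_single_eq_diagonal]
  simp only [hsum]
  exact HasDerivAt.fun_sum fun k _ => (hf k).smul_const _

noncomputable def spectralRiccatiSol (Φ : Matrix m m ℝ) (d w₀ : m → ℝ) (t : ℝ) : Matrix m m ℝ :=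
  Φ * Matrix.diagonal (fun k => logisticSol (d k) (w₀ k) t) * Φᵀ

lemma spectralRiccatiSol_apply_zero (Φ : Matrix m m ℝ) (d w₀ : m → ℝ) :
    spectralRiccatiSol Φ d w₀ 0 = Φ * Matrix.diagonal w₀ * Φᵀ := by
  simp only [spectralRiccatiSol, logisticSol_apply_zero]

lemma hasDerivAt_spectralRiccatiSol {Φ : Matrix m m ℝ} (hΦ : Φᵀ * Φ = 1) {d w₀ : m → ℝ}
    (hd : ∀ k, 0 ≤ d k) (hw₀ : ∀ k, 0 ≤ w₀ k) {t : ℝ} (ht : 0 ≤ t) :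
    HasDerivAt (spectralRiccatiSol Φ d w₀)
      (riccatiField (Φ * Matrix.diagonal d * Φᵀ) (spectralRiccatiSol Φ d w₀ t)) t := by
  rw [spectralRiccatiSol, riccatiField_conj hΦ, riccatiField_diagonal]
  exact ((hasDerivAt_matrix_diagonal fun k =>
    hasDerivAt_logisticSol (hd k) (hw₀ k) ht).const_mul Φ).mul_const Φᵀ

lemma tendsto_spectralRiccatiSol (Φ : Matrix m m ℝ) {d w₀ : m → ℝ} (hd : ∀ k, 0 ≤ d k)
    (hw₀ : ∀ k, 0 ≤ w₀ k) (hpos : ∀ k, 0 < d k → 0 < w₀ k) :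
    Tendsto (spectralRiccatiSol Φ d w₀) atTop (𝓝 (Φ * Matrix.diagonal d * Φᵀ)) := by
  have hdiag : Tendsto (fun t k => logisticSol (d k) (w₀ k) t) atTop (𝓝 d) :=
    tendsto_pi_nhds.2 fun k => tendsto_logisticSol (hd k) (hw₀ k) (hpos k)
  exact ((continuous_const.matrix_mul continuous_id.matrix_diagonal).matrix_mul
    continuous_const).continuousAt.tendsto.comp hdiag

end Spectral

/-- **Convergence under spectral initialization.** With `Y = Φ diag(d) Φᵀ` PSD
(`Φ` orthogonal, `d i ≥ 0`), let `W` be the solution of `Ẇ = WY + YW - 2W²` with the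
spectral initialization `W(0) = α Φ diag(σ₀) Φᵀ` (`α > 0`, `σ₀ᵢ ≥ 0`). If `σ₀ᵢ > 0`
for every `i` with `d i > 0`, then `W(t) → Y` entrywise as `t → ∞`. -/
theorem spectral_initialization_convergence
    (n : ℕ)
    (Φ : Matrix (Fin n) (Fin n) ℝ) (hΦ : Φ * Φᵀ = 1 ∧ Φᵀ * Φ = 1)
    (d : Fin n → ℝ) (hd : ∀ i, 0 ≤ d i)
    (Y : Matrix (Fin n) (Fin n) ℝ) (hY : Y = Φ * Matrix.diagonal d * Φᵀ)
    (σ0 : Fin n → ℝ) (hσ0 : ∀ i, 0 ≤ σ0 i)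
    (α : ℝ) (hα : 0 < α)
    (W : ℝ → Matrix (Fin n) (Fin n) ℝ)
    (hW0 : W 0 = α • (Φ * Matrix.diagonal σ0 * Φᵀ))
    (hWd : ∀ t : ℝ, 0 ≤ t →
      HasDerivWithinAt W (W t * Y + Y * W t - 2 * (W t * W t)) (Set.Ici 0) t)
    (hpos : ∀ i, 0 < d i → 0 < σ0 i) :
    ∀ i j : Fin n, Filter.Tendsto (fun t => W t i j) Filter.atTop (nhds (Y i j)) := by
  have hw₀ : ∀ k, 0 ≤ (α • σ0) k := fun k => mul_nonneg hα.le (hσ0 k)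
  have hsol : EqOn W (spectralRiccatiSol Φ d (α • σ0)) (Ici 0) := by
    refine ODE_solution_unique_Ici_of_lipschitzOnWith_closedBall (v := riccatiField Y)
      (fun r => ⟨_, lipschitzOnWith_riccatiField Y r⟩) hWd (fun t ht => ?_) ?_
    · rw [hY]
      exact (hasDerivAt_spectralRiccatiSol hΦ.2 hd hw₀ ht).hasDerivWithinAt
    · rw [hW0, spectralRiccatiSol_apply_zero, Matrix.diagonal_smul, Matrix.mul_smul,
        Matrix.smul_mul]
  have hlim := tendsto_spectralRiccatiSol Φ hd hw₀ fun k hk => mul_pos hα (hpos k hk)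
  rw [← hY] at hlim
  intro i j
  refine (tendsto_pi_nhds.1 (tendsto_pi_nhds.1 hlim i) j).congr' ?_
  filter_upwards [Ici_mem_atTop 0] with t ht
  rw [hsol ht]
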